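/- Let E be a directed graph, R a commutative unital ring, H a finite hereditary saturated subset of E^0 satisfying Condition (F) with B_H = ∅ and with F_E'(H) = F_E(H) finite. Then the element a = Σ_{v∈H} v + Σ_{α∈F_E(H)} αα* of the Leavitt path algebra L_R(E) is central: ab = ba for all b ∈ L_R(E). -/

import Mathlib

/-- A directed graph: vertices, edges, source and range maps. -/
structure DirGraph where
  V : Type
  E : Type
  s : E → V
  r : E → V

/-- A walk: a candidate finite path, given by a source vertex and a list of edges. -/
structure Walk (G : DirGraph) where
  src : G.V
  edges : List G.E

/-- The range (final vertex) of a walk. -/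
def Walk.rng {G : DirGraph} (p : Walk G) : G.V :=
  match p.edges.getLast? with
  | none => p.src
  | some e => G.r e

/-- Appending two walks. -/
def Walk.append {G : DirGraph} (p q : Walk G) : Walk G := ⟨p.src, p.edges ++ q.edges⟩

/-- The `n`-fold power of a walk (concatenation with itself). -/
def Walk.pow {G : DirGraph} (c : Walk G) (n : ℕ) : Walk G :=
  ⟨c.src, (List.replicate n c.edges).flatten⟩

namespace DirGraph
variable (G : DirGraph)

/-- A walk is a genuine finite path: the first edge starts at the source and
consecutive edges match up. -/
def IsPath (p : Walk G) : Prop :=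
  (∀ e, p.edges.head? = some e → G.s e = p.src) ∧
    p.edges.Chain' (fun a b => G.r a = G.s b)

/-- A subset of vertices is hereditary. -/
def Hereditary (H : Set G.V) : Prop :=
  ∀ p : Walk G, G.IsPath p → p.src ∈ H → p.rng ∈ H

/-- A regular vertex: emits at least one and finitely many edges. -/
def Regular (v : G.V) : Prop :=
  {e | G.s e = v}.Finite ∧ {e | G.s e = v}.Nonempty

/-- A subset of vertices is saturated. -/
def Saturated (H : Set G.V) : Prop :=
  ∀ v, G.Regular v → (∀ e, G.s e = v → G.r e ∈ H) → v ∈ H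

/-- The saturated closure: the smallest hereditary and saturated set containing `H`. -/
def satClosure (H : Set G.V) : Set G.V :=
  ⋂₀ {K | H ⊆ K ∧ G.Hereditary K ∧ G.Saturated K}

/-- The set of vertices of a walk (sources of its edges). -/
def verts (c : Walk G) : Set G.V := {v | ∃ e ∈ c.edges, G.s e = v}

/-- A cycle: a nontrivial closed path with no repeated vertices except the base. -/
def IsCycle (c : Walk G) : Prop :=
  G.IsPath c ∧ c.edges ≠ [] ∧ c.rng = c.src ∧ (c.edges.map G.s).Nodup

/-- A cycle (or walk) has no exits: each vertex on it emits only the edge of the walk. -/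
def NoExits (c : Walk G) : Prop :=
  ∀ e ∈ c.edges, ∀ e', G.s e' = G.s e → e' = e

/-- `F_E(H)`: paths reaching `H` exactly at their final vertex. -/
def FE (H : Set G.V) : Set (Walk G) :=
  {α | G.IsPath α ∧ α.edges ≠ [] ∧ α.src ∉ H ∧
       (∀ e ∈ α.edges.dropLast, G.r e ∉ H) ∧ α.rng ∈ H}

/-- The breaking vertices of `H`. -/
def BH (H : Set G.V) : Set G.V :=
  {v | v ∉ H ∧ {e | G.s e = v}.Infinite ∧
       {e | G.s e = v ∧ G.r e ∉ H}.Nonempty ∧ {e | G.s e = v ∧ G.r e ∉ H}.Finite}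

/-- `F_E'(H)`: members of `F_E(H)` whose last edge has source not a breaking vertex. -/
def FE' (H : Set G.V) : Set (Walk G) :=
  {α | α ∈ G.FE H ∧ ∀ e, α.edges.getLast? = some e → G.s e ∉ G.BH H}

/-- Condition (F): `H ∪ F_E'(H) ∪ {α ∈ Path(E) : r(α) ∈ B_H}` is finite. -/
def ConditionF (H : Set G.V) : Prop :=
  H.Finite ∧ (G.FE' H).Finite ∧ {α : Walk G | G.IsPath α ∧ α.rng ∈ G.BH H}.Finite

/-- An infinite path, given by its sequence of edges. -/
def IsInfPath (x : ℕ → G.E) : Prop := ∀ i, G.r (x i) = G.s (x (i + 1))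

/-- The edge sequence of the concatenation of a finite walk with an infinite edge sequence. -/
def concatSeq (p : Walk G) (x : ℕ → G.E) : ℕ → G.E := fun n =>
  if h : n < p.edges.length then p.edges.get ⟨n, h⟩ else x (n - p.edges.length)

end DirGraph

/-- Generators of the Leavitt path algebra: vertices, edges, and ghost edges. -/
inductive LGen (G : DirGraph) : Type
  | vert : G.V → LGen G
  | edge : G.E → LGen G
  | ghost : G.E → LGen G

/-- The defining relations (V), (E1), (E2), (CK1), (CK2) of the Leavitt path algebra. -/
inductive LeavittRel (R : Type) [CommRing R] (G : DirGraph) :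
    FreeAlgebra R (LGen G) → FreeAlgebra R (LGen G) → Prop
  | v_same (v : G.V) : LeavittRel R G
      (FreeAlgebra.ι R (LGen.vert v) * FreeAlgebra.ι R (LGen.vert v))
      (FreeAlgebra.ι R (LGen.vert v))
  | v_diff (v w : G.V) (h : v ≠ w) : LeavittRel R G
      (FreeAlgebra.ι R (LGen.vert v) * FreeAlgebra.ι R (LGen.vert w)) 0
  | e1_left (e : G.E) : LeavittRel R G
      (FreeAlgebra.ι R (LGen.vert (G.s e)) * FreeAlgebra.ι R (LGen.edge e))
      (FreeAlgebra.ι R (LGen.edge e))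
  | e1_right (e : G.E) : LeavittRel R G
      (FreeAlgebra.ι R (LGen.edge e) * FreeAlgebra.ι R (LGen.vert (G.r e)))
      (FreeAlgebra.ι R (LGen.edge e))
  | e2_left (e : G.E) : LeavittRel R G
      (FreeAlgebra.ι R (LGen.vert (G.r e)) * FreeAlgebra.ι R (LGen.ghost e))
      (FreeAlgebra.ι R (LGen.ghost e))
  | e2_right (e : G.E) : LeavittRel R G
      (FreeAlgebra.ι R (LGen.ghost e) * FreeAlgebra.ι R (LGen.vert (G.s e)))
      (FreeAlgebra.ι R (LGen.ghost e))
  | ck1_same (e : G.E) : LeavittRel R G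
      (FreeAlgebra.ι R (LGen.ghost e) * FreeAlgebra.ι R (LGen.edge e))
      (FreeAlgebra.ι R (LGen.vert (G.r e)))
  | ck1_diff (e f : G.E) (h : e ≠ f) : LeavittRel R G
      (FreeAlgebra.ι R (LGen.ghost e) * FreeAlgebra.ι R (LGen.edge f)) 0
  | ck2 (v : G.V) (hf : {e | G.s e = v}.Finite) (hn : {e | G.s e = v}.Nonempty) :
      LeavittRel R G (FreeAlgebra.ι R (LGen.vert v))
        (∑ e ∈ hf.toFinset, FreeAlgebra.ι R (LGen.edge e) * FreeAlgebra.ι R (LGen.ghost e))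

/-- The Leavitt path algebra `L_R(E)`. -/
abbrev Leavitt (R : Type) [CommRing R] (G : DirGraph) : Type := RingQuot (LeavittRel R G)

variable (R : Type) [CommRing R] (G : DirGraph)

/-- The vertex idempotent `v ∈ L_R(E)`. -/
def lv (v : G.V) : Leavitt R G :=
  RingQuot.mkRingHom (LeavittRel R G) (FreeAlgebra.ι R (LGen.vert v))

/-- The edge element `e ∈ L_R(E)`. -/
def le (e : G.E) : Leavitt R G :=
  RingQuot.mkRingHom (LeavittRel R G) (FreeAlgebra.ι R (LGen.edge e))

/-- The ghost edge element `e* ∈ L_R(E)`. -/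
def lg (e : G.E) : Leavitt R G :=
  RingQuot.mkRingHom (LeavittRel R G) (FreeAlgebra.ι R (LGen.ghost e))

/-- The element `α ∈ L_R(E)` associated to a path `α`. -/
def lpath (α : Walk G) : Leavitt R G :=
  lv R G α.src * (α.edges.map (le R G)).prod

/-- The ghost element `α* ∈ L_R(E)` associated to a path `α`. -/
def lstar (α : Walk G) : Leavitt R G :=
  (α.edges.reverse.map (lg R G)).prod * lv R G α.src
/-!
Write `a = ∑_{v ∈ H} v + ∑_{α ∈ F_E(H)} αα*`; it suffices that `a` commutes with the generators.
A vertex `w` commutes with every summand, since `w v = v w = δ_{vw} v` and `w α = δ_{w,s(α)} α`.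
For an edge `e` the cases are:
* `s(e) ∈ H`: then `r(e) ∈ H` by heredity, no path of `F_E(H)` starts at `s(e)` or `r(e)`, and
  `ae = e = ea`;
* `s(e) ∉ H`, `r(e) ∈ H`: the only `α ∈ F_E(H)` starting with `e` is `e` itself, so again
  `ae = e e* e = e = ea`;
* `s(e), r(e) ∉ H`: `β ↦ eβ` is a bijection from the paths of `F_E(H)` starting at `r(e)` onto
  those starting with `e`, matching `ea = ∑ eββ*` with `ae = ∑ (eβ)(eβ)* e` term by term.

Ghost edges need no separate computation: the involution fixing vertices and exchanging `e` and
`e*` fixes `a`, and carries `ae = ea` to `e*a = ae*`.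
-/

open scoped Classical
open MulOpposite

theorem Walk.rng_cons {G : DirGraph} (v : G.V) (e : G.E) (l : List G.E) :
    Walk.rng (⟨v, e :: l⟩ : Walk G) = Walk.rng (⟨G.r e, l⟩ : Walk G) := by
  rcases l with _ | ⟨f, t⟩
  · rfl
  · simp only [Walk.rng, List.getLast?_cons_cons,
      List.getLast?_eq_some_getLast (List.cons_ne_nil f t)]

namespace DirGraph

variable {G} {H : Set G.V}

lemma isPath_iff (p : Walk G) : G.IsPath p ↔
    (∀ e, p.edges.head? = some e → G.s e = p.src) ∧
      p.edges.IsChain (fun a b => G.r a = G.s b) :=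
  Iff.rfl

lemma isPath_cons_iff (e : G.E) (l : List G.E) :
    G.IsPath ⟨G.s e, e :: l⟩ ↔ G.IsPath ⟨G.r e, l⟩ := by
  simp [isPath_iff, List.isChain_cons, eq_comm]

lemma IsPath.src_eq_s {v : G.V} {e : G.E} {l : List G.E} (hp : G.IsPath ⟨v, e :: l⟩) :
    v = G.s e :=
  (hp.1 e rfl).symm

lemma Hereditary.r_mem (hH : G.Hereditary H) {e : G.E} (hs : G.s e ∈ H) : G.r e ∈ H :=
  hH ⟨G.s e, [e]⟩ ((isPath_cons_iff e []).2 ⟨by simp, List.isChain_nil⟩) hs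

lemma exists_eq_cons_of_mem_FE {α : Walk G} (hα : α ∈ G.FE H) :
    ∃ f l, α = ⟨G.s f, f :: l⟩ := by
  obtain ⟨v, l⟩ := α
  obtain ⟨hp, hne, -⟩ := hα
  obtain ⟨f, l, rfl⟩ := List.exists_cons_of_ne_nil hne
  exact ⟨f, l, by rw [hp.src_eq_s]⟩

lemma eq_cons_tail_of_mem_FE {α : Walk G} (hα : α ∈ G.FE H) {e : G.E}
    (he : α.edges.head? = some e) : α = ⟨G.s e, e :: α.edges.tail⟩ := by
  obtain ⟨f, l, rfl⟩ := exists_eq_cons_of_mem_FE hα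
  obtain rfl : f = e := by simpa using he
  rfl

lemma singleton_mem_FE {e : G.E} (hs : G.s e ∉ H) (hr : G.r e ∈ H) :
    (⟨G.s e, [e]⟩ : Walk G) ∈ G.FE H := by
  simp [FE, isPath_iff, Walk.rng, hs, hr]

lemma eq_nil_of_cons_mem_FE {v : G.V} {e : G.E} {l : List G.E}
    (h : (⟨v, e :: l⟩ : Walk G) ∈ G.FE H) (hr : G.r e ∈ H) : l = [] := by
  rcases l with _ | ⟨f, t⟩
  · rfl
  · exact absurd hr (h.2.2.2.1 e (by simp))

lemma cons_mem_FE_iff {e : G.E} (hs : G.s e ∉ H) (hr : G.r e ∉ H) (l : List G.E) :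
    (⟨G.s e, e :: l⟩ : Walk G) ∈ G.FE H ↔ (⟨G.r e, l⟩ : Walk G) ∈ G.FE H := by
  rcases l with _ | ⟨f, t⟩
  · simp [FE, Walk.rng, hr]
  · simp [FE, isPath_cons_iff, Walk.rng_cons, hs, hr]

end DirGraph

namespace Leavitt

open DirGraph

variable {R G}

lemma mkRingHom_mul_of_rel {x y z : FreeAlgebra R (LGen G)} (h : LeavittRel R G (x * y) z) :
    RingQuot.mkRingHom (LeavittRel R G) x * RingQuot.mkRingHom (LeavittRel R G) y =
      RingQuot.mkRingHom (LeavittRel R G) z :=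
  (map_mul _ _ _).symm.trans (RingQuot.mkRingHom_rel h)

lemma lv_mul_lv (v w : G.V) : lv R G v * lv R G w = if v = w then lv R G v else 0 := by
  split_ifs with h
  · subst h; exact mkRingHom_mul_of_rel (.v_same v)
  · exact (mkRingHom_mul_of_rel (.v_diff v w h)).trans (map_zero _)

lemma lv_src_mul_le (e : G.E) : lv R G (G.s e) * le R G e = le R G e :=
  mkRingHom_mul_of_rel (.e1_left e)

lemma le_mul_lv_rng (e : G.E) : le R G e * lv R G (G.r e) = le R G e :=
  mkRingHom_mul_of_rel (.e1_right e)

lemma lv_rng_mul_lg (e : G.E) : lv R G (G.r e) * lg R G e = lg R G e :=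
  mkRingHom_mul_of_rel (.e2_left e)

lemma lg_mul_lv_src (e : G.E) : lg R G e * lv R G (G.s e) = lg R G e :=
  mkRingHom_mul_of_rel (.e2_right e)

lemma lg_mul_le (e f : G.E) : lg R G e * le R G f = if e = f then lv R G (G.r e) else 0 := by
  split_ifs with h
  · subst h; exact mkRingHom_mul_of_rel (.ck1_same e)
  · exact (mkRingHom_mul_of_rel (.ck1_diff e f h)).trans (map_zero _)

lemma lv_eq_sum_le_mul_lg (v : G.V) (hf : {e | G.s e = v}.Finite)
    (hn : {e | G.s e = v}.Nonempty) :
    lv R G v = ∑ e ∈ hf.toFinset, le R G e * lg R G e := by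
  refine (RingQuot.mkRingHom_rel (LeavittRel.ck2 v hf hn)).trans ?_
  simp only [map_sum, map_mul]
  rfl

lemma lv_mul_le (v : G.V) (e : G.E) :
    lv R G v * le R G e = if v = G.s e then le R G e else 0 := by
  by_cases h : v = G.s e
  · rw [if_pos h, h, lv_src_mul_le]
  · rw [if_neg h, ← lv_src_mul_le, ← mul_assoc, lv_mul_lv, if_neg h, zero_mul]

lemma le_mul_lv (e : G.E) (v : G.V) :
    le R G e * lv R G v = if v = G.r e then le R G e else 0 := by
  by_cases h : v = G.r e
  · rw [if_pos h, h, le_mul_lv_rng]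
  · rw [if_neg h, ← le_mul_lv_rng, mul_assoc, lv_mul_lv, if_neg (Ne.symm h), mul_zero]

lemma lv_mul_lpath (v : G.V) (p : Walk G) :
    lv R G v * lpath R G p = if v = p.src then lpath R G p else 0 := by
  rw [lpath, ← mul_assoc, lv_mul_lv]
  split_ifs with h
  · rw [h]
  · rw [zero_mul]

lemma lstar_mul_lv (p : Walk G) (v : G.V) :
    lstar R G p * lv R G v = if v = p.src then lstar R G p else 0 := by
  rw [lstar, mul_assoc, lv_mul_lv]
  by_cases h : v = p.src <;> simp [h, eq_comm]

lemma le_mul_lpath (e : G.E) (p : Walk G) :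
    le R G e * lpath R G p = if p.src = G.r e then lpath R G ⟨G.s e, e :: p.edges⟩ else 0 := by
  rw [lpath, ← mul_assoc, le_mul_lv]
  split_ifs
  · rw [lpath, List.map_cons, List.prod_cons, ← mul_assoc, lv_src_mul_le]
  · rw [zero_mul]

lemma lstar_cons_mul_le (f : G.E) (l : List G.E) (e : G.E) :
    lstar R G ⟨G.s f, f :: l⟩ * le R G e = if f = e then lstar R G ⟨G.r f, l⟩ else 0 := by
  simp only [lstar, List.reverse_cons, List.map_append, List.prod_append, List.map_singleton,
    List.prod_singleton, mul_assoc, lg_mul_lv_src, lg_mul_le]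
  split_ifs <;> simp

variable (R G) in
def starGen : LGen G → (Leavitt R G)ᵐᵒᵖ
  | .vert v => op (lv R G v)
  | .edge e => op (lg R G e)
  | .ghost e => op (le R G e)

lemma lift_starGen_eq_of_rel ⦃x y : FreeAlgebra R (LGen G)⦄ (h : LeavittRel R G x y) :
    FreeAlgebra.lift R (starGen R G) x = FreeAlgebra.lift R (starGen R G) y := by
  cases h with
  | v_diff v w h => simp [starGen, ← op_mul, lv_mul_lv, Ne.symm h]
  | ck1_diff e f h => simp [starGen, ← op_mul, lg_mul_le, Ne.symm h]
  | ck2 v hf hn => simpa [starGen, ← op_mul, ← Finset.op_sum] using lv_eq_sum_le_mul_lg v hf hn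
  | _ => simp [starGen, ← op_mul, lv_mul_lv, lv_src_mul_le, le_mul_lv_rng, lv_rng_mul_lg,
      lg_mul_lv_src, lg_mul_le]

variable (R G) in
/-- The involution of `L_R(E)` fixing vertices and exchanging `e` and `e*`, as an algebra map
into the opposite algebra. -/
noncomputable def starOp : Leavitt R G →ₐ[R] (Leavitt R G)ᵐᵒᵖ :=
  RingQuot.liftAlgHom R ⟨FreeAlgebra.lift R (starGen R G), lift_starGen_eq_of_rel⟩

lemma starOp_mkRingHom (x : FreeAlgebra R (LGen G)) :
    starOp R G (RingQuot.mkRingHom _ x) = FreeAlgebra.lift R (starGen R G) x := by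
  rw [← RingQuot.mkAlgHom_coe R, starOp]
  exact RingQuot.liftAlgHom_mkAlgHom_apply _ _ _ x

@[simp] lemma starOp_lv (v : G.V) : starOp R G (lv R G v) = op (lv R G v) := by
  rw [lv, starOp_mkRingHom, FreeAlgebra.lift_ι_apply]; rfl

@[simp] lemma starOp_le (e : G.E) : starOp R G (le R G e) = op (lg R G e) := by
  rw [le, starOp_mkRingHom, FreeAlgebra.lift_ι_apply]; rfl

@[simp] lemma starOp_lg (e : G.E) : starOp R G (lg R G e) = op (le R G e) := by
  rw [lg, starOp_mkRingHom, FreeAlgebra.lift_ι_apply]; rfl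

@[simp] lemma starOp_lpath (p : Walk G) : starOp R G (lpath R G p) = op (lstar R G p) := by
  simp [lpath, lstar, map_list_prod, List.map_map, op_list_prod, Function.comp_def]

@[simp] lemma starOp_lstar (p : Walk G) : starOp R G (lstar R G p) = op (lpath R G p) := by
  simp [lpath, lstar, map_list_prod, List.map_map, op_list_prod, Function.comp_def]

lemma commute_lg_of_commute_le {a : Leavitt R G} (ha : starOp R G a = op a) {e : G.E}
    (h : Commute a (le R G e)) : Commute a (lg R G e) := by
  simpa [ha] using (h.map (starOp R G)).unop

lemma mkAlgHom_ι (x : LGen G) :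
    RingQuot.mkAlgHom R (LeavittRel R G) (FreeAlgebra.ι R x) =
      RingQuot.mkRingHom (LeavittRel R G) (FreeAlgebra.ι R x) := by
  rw [← RingQuot.mkAlgHom_coe R]; rfl

lemma commute_of_commute_generators {a : Leavitt R G} (hv : ∀ v, Commute a (lv R G v))
    (he : ∀ e, Commute a (le R G e)) (hg : ∀ e, Commute a (lg R G e)) (b : Leavitt R G) :
    Commute a b := by
  obtain ⟨x, rfl⟩ := RingQuot.mkAlgHom_surjective R (LeavittRel R G) b
  induction x using FreeAlgebra.induction with
  | grade0 r => simpa only [AlgHom.commutes] using Algebra.commute_algebraMap_right r a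
  | grade1 x =>
    rw [mkAlgHom_ι]
    cases x with
    | vert v => exact hv v
    | edge e => exact he e
    | ghost e => exact hg e
  | mul x y hx hy => simpa only [map_mul] using hx.mul_right hy
  | add x y hx hy => simpa only [map_add] using hx.add_right hy

lemma sum_lv_mul_le (S : Finset G.V) (e : G.E) :
    (∑ v ∈ S, lv R G v) * le R G e = if G.s e ∈ S then le R G e else 0 := by
  simp [Finset.sum_mul, lv_mul_le]

lemma le_mul_sum_lv (S : Finset G.V) (e : G.E) :
    le R G e * ∑ v ∈ S, lv R G v = if G.r e ∈ S then le R G e else 0 := by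
  simp [Finset.mul_sum, le_mul_lv]

lemma le_mul_sum_lpath_mul_lstar (S : Finset (Walk G)) (e : G.E) :
    le R G e * ∑ α ∈ S, lpath R G α * lstar R G α =
      ∑ α ∈ S with α.src = G.r e, lpath R G ⟨G.s e, e :: α.edges⟩ * lstar R G α := by
  simp [Finset.sum_filter, Finset.mul_sum, ← mul_assoc, le_mul_lpath]

lemma sum_lpath_mul_lstar_mul_le (S : Finset (Walk G))
    (hS : ∀ α ∈ S, ∃ f l, α = ⟨G.s f, f :: l⟩) (e : G.E) :
    (∑ α ∈ S, lpath R G α * lstar R G α) * le R G e =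
      ∑ α ∈ S with α.edges.head? = some e, lpath R G α * lstar R G ⟨G.r e, α.edges.tail⟩ := by
  rw [Finset.sum_filter, Finset.sum_mul]
  refine Finset.sum_congr rfl fun α hα => ?_
  obtain ⟨f, l, rfl⟩ := hS α hα
  rw [mul_assoc, lstar_cons_mul_le]
  by_cases h : f = e
  · subst h; simp
  · simp [h]

variable {H : Set G.V}

variable (R G) in
noncomputable def centralElt (hH : H.Finite) (hF : (G.FE H).Finite) : Leavitt R G :=
  ∑ v ∈ hH.toFinset, lv R G v + ∑ α ∈ hF.toFinset, lpath R G α * lstar R G α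

variable (hH : H.Finite) (hF : (G.FE H).Finite)

lemma starOp_centralElt : starOp R G (centralElt R G hH hF) = op (centralElt R G hH hF) := by
  simp [centralElt, ← op_mul]

lemma commute_centralElt_lv (v : G.V) : Commute (centralElt R G hH hF) (lv R G v) := by
  refine .add_left (.sum_left _ _ _ fun w _ => ?_) (.sum_left _ _ _ fun α _ => ?_)
  · simp only [Commute, SemiconjBy, lv_mul_lv, eq_comm]
    split_ifs with h <;> simp [h]
  · rw [Commute, SemiconjBy, mul_assoc, lstar_mul_lv, ← mul_assoc, lv_mul_lpath]
    split_ifs <;> simp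

lemma sum_head?_eq_sum_src_eq {e : G.E} (hs : G.s e ∉ H) (hr : G.r e ∉ H) :
    ∑ α ∈ hF.toFinset with α.edges.head? = some e,
        lpath R G α * lstar R G ⟨G.r e, α.edges.tail⟩ =
      ∑ β ∈ hF.toFinset with β.src = G.r e, lpath R G ⟨G.s e, e :: β.edges⟩ * lstar R G β := by
  refine Finset.sum_nbij' (fun α => ⟨G.r e, α.edges.tail⟩) (fun β => ⟨G.s e, e :: β.edges⟩)
    ?_ ?_ ?_ ?_ ?_ <;> simp only [Finset.mem_filter, Set.Finite.mem_toFinset]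
  · rintro α ⟨hα, he⟩
    rw [eq_cons_tail_of_mem_FE hα he, cons_mem_FE_iff hs hr] at hα
    exact ⟨hα, trivial⟩
  · rintro ⟨v, l⟩ ⟨hβ, rfl⟩
    exact ⟨(cons_mem_FE_iff hs hr l).2 hβ, rfl⟩
  · rintro α ⟨hα, he⟩
    exact (eq_cons_tail_of_mem_FE hα he).symm
  · rintro ⟨v, l⟩ ⟨-, rfl⟩
    rfl
  · rintro α ⟨hα, he⟩
    rw [← eq_cons_tail_of_mem_FE hα he]

lemma commute_centralElt_le (hHer : G.Hereditary H) (e : G.E) :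
    Commute (centralElt R G hH hF) (le R G e) := by
  have hcons : ∀ α ∈ hF.toFinset, ∃ f l, α = ⟨G.s f, f :: l⟩ :=
    fun α hα => exists_eq_cons_of_mem_FE (hF.mem_toFinset.1 hα)
  rw [Commute, SemiconjBy, centralElt, add_mul, mul_add, sum_lv_mul_le, le_mul_sum_lv,
    sum_lpath_mul_lstar_mul_le _ hcons, le_mul_sum_lpath_mul_lstar]
  simp only [Set.Finite.mem_toFinset]
  have hsrc : ∀ α ∈ hF.toFinset, α.src ∉ H := fun α hα => (hF.mem_toFinset.1 hα).2.2.1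
  have hsum_src_eq : G.r e ∈ H →
      ∑ β ∈ hF.toFinset with β.src = G.r e, lpath R G ⟨G.s e, e :: β.edges⟩ * lstar R G β = 0 :=
    fun hr => Finset.sum_eq_zero fun β hβ =>
      absurd ((Finset.mem_filter.1 hβ).2 ▸ hr) (hsrc β (Finset.mem_filter.1 hβ).1)
  by_cases hs : G.s e ∈ H
  · rw [if_pos hs, if_pos (hHer.r_mem hs), hsum_src_eq (hHer.r_mem hs), Finset.sum_eq_zero]
    intro α hα
    obtain ⟨hα, he⟩ := Finset.mem_filter.1 hα
    refine absurd ?_ (hsrc α hα)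
    rw [eq_cons_tail_of_mem_FE (hF.mem_toFinset.1 hα) he]
    exact hs
  by_cases hr : G.r e ∈ H
  · rw [if_neg hs, if_pos hr, hsum_src_eq hr, zero_add, add_zero]
    have hmem_single : (⟨G.s e, [e]⟩ : Walk G) ∈ hF.toFinset.filter (·.edges.head? = some e) :=
      Finset.mem_filter.2 ⟨hF.mem_toFinset.2 (singleton_mem_FE hs hr), rfl⟩
    rw [Finset.sum_eq_single_of_mem _ hmem_single]
    · simp [lpath, lstar, lv_src_mul_le, le_mul_lv_rng]
    intro α hα hne
    obtain ⟨hα, he⟩ := Finset.mem_filter.1 hα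
    have hmem := hF.mem_toFinset.1 hα
    have hα_eq := eq_cons_tail_of_mem_FE hmem he
    rw [hα_eq] at hmem
    rw [hα_eq, eq_nil_of_cons_mem_FE hmem hr] at hne
    exact absurd rfl hne
  · rw [if_neg hs, if_neg hr, sum_head?_eq_sum_src_eq hF hs hr]

end Leavitt

theorem central_element_general (R : Type) [CommRing R] (G : DirGraph) (H : Set G.V)
    (hHh : G.Hereditary H)
    (hHfin : H.Finite) (hFEfin : (G.FE H).Finite) :
    ∀ b : Leavitt R G,
      (∑ v ∈ hHfin.toFinset, lv R G v +
          ∑ α ∈ hFEfin.toFinset, lpath R G α * lstar R G α) * b =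
        b * (∑ v ∈ hHfin.toFinset, lv R G v +
          ∑ α ∈ hFEfin.toFinset, lpath R G α * lstar R G α) :=
  have commute_le := Leavitt.commute_centralElt_le (R := R) hHfin hFEfin hHh
  Leavitt.commute_of_commute_generators (Leavitt.commute_centralElt_lv hHfin hFEfin) commute_le
    fun e => Leavitt.commute_lg_of_commute_le (Leavitt.starOp_centralElt hHfin hFEfin)
      (commute_le e)

/-- for a finite hereditary saturated `H` satisfying Condition (F) with
`B_H = ∅` and `F_E'(H) = F_E(H)` finite, the element
`Σ_{v ∈ H} v + Σ_{α ∈ F_E(H)} αα*` is central in `L_R(E)`. -/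
theorem central_element (R : Type) [CommRing R] (G : DirGraph) (H : Set G.V)
    (hHh : G.Hereditary H) (hHs : G.Saturated H)
    (hCF : G.ConditionF H) (hBH : G.BH H = ∅)
    (hHfin : H.Finite) (hFEfin : (G.FE H).Finite) :
    ∀ b : Leavitt R G,
      (∑ v ∈ hHfin.toFinset, lv R G v +
          ∑ α ∈ hFEfin.toFinset, lpath R G α * lstar R G α) * b =
        b * (∑ v ∈ hHfin.toFinset, lv R G v +
          ∑ α ∈ hFEfin.toFinset, lpath R G α * lstar R G α) :=
  central_element_general R G H hHh hHfin hFEfin
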